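/- arXiv:2306.10677 — 3 statements merged into one kernel-verified Lean document; each statement's English description precedes it below -/
import Mathlib

section
/- Let f ∈ ℤ[X] be a polynomial of degree d ≥ 2. For every ε > 0 there exists a constant C = C(d, ε) > 0 such that for every nonzero integer w and every integer H ≥ 1, the number of pairs (n, m) of integers with 1 ≤ n, m ≤ H and f(n) − f(m) = w is at most C · |w|^ε. -/
/-!
If `f(n) - f(m) = w`, then `n - m` divides `w`, so it is one of the `2 τ(|w|)` divisors of `w`.
For a fixed divisor `k ≠ 0`, `n` is a root of `f(X) - f(X - k) - w`; this polynomial is nonzero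
because the finite differences of a polynomial of degree `≥ 2` are not constant, so each `k`
accounts for at most `d` pairs. The divisor bound `τ(N) ≤ C_ε N^ε` finishes the proof.
-/

open Finset

lemma exists_add_one_le_mul_pow {r : ℝ} (hr : 1 < r) :
    ∃ C : ℝ, 1 ≤ C ∧ ∀ a : ℕ, (a + 1 : ℝ) ≤ C * r ^ a := by
  have hr1 : 0 < r - 1 := by linarith
  refine ⟨max 1 (1 / (r - 1)), le_max_left _ _, fun a => ?_⟩
  have hC : 1 ≤ max 1 (1 / (r - 1)) * (r - 1) := by
    rw [← div_le_iff₀ hr1]; exact le_max_right _ _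
  have hBernoulli : 1 + a * (r - 1) ≤ r ^ a := by
    simpa using one_add_mul_le_pow (a := r - 1) (by linarith) a
  have ha : (0 : ℝ) ≤ a := a.cast_nonneg
  calc (a + 1 : ℝ) ≤ max 1 (1 / (r - 1)) * (1 + a * (r - 1)) := by
        nlinarith [le_max_left 1 (1 / (r - 1))]
    _ ≤ max 1 (1 / (r - 1)) * r ^ a := by gcongr

lemma add_one_le_rpow_pow {x ε : ℝ} (hε : 0 < ε) (hx : 2 ^ (1 / ε) ≤ x) (a : ℕ) :
    (a + 1 : ℝ) ≤ (x ^ ε) ^ a := by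
  have h2 : (2 : ℝ) ≤ x ^ ε := by
    calc (2 : ℝ) = (2 ^ (1 / ε)) ^ ε := by
          rw [← Real.rpow_mul zero_le_two, one_div_mul_cancel hε.ne', Real.rpow_one]
      _ ≤ x ^ ε := by gcongr
  calc (a + 1 : ℝ) ≤ 2 ^ a := by exact_mod_cast a.lt_two_pow_self
    _ ≤ (x ^ ε) ^ a := by gcongr

lemma Nat.cast_rpow_eq_prod_primeFactors {n : ℕ} (hn : n ≠ 0) (ε : ℝ) :
    (n : ℝ) ^ ε = ∏ p ∈ n.primeFactors, ((p : ℝ) ^ ε) ^ n.factorization p := by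
  conv_lhs => rw [Nat.prod_primeFactors_pow_factorization hn]
  push_cast
  rw [← Real.finsetProd_rpow _ _ fun p _ => by positivity]
  exact prod_congr rfl fun p _ => (Real.rpow_pow_comm p.cast_nonneg ε _).symm

theorem Nat.exists_card_divisors_le_mul_rpow {ε : ℝ} (hε : 0 < ε) :
    ∃ C : ℝ, 0 < C ∧ ∀ n : ℕ, n ≠ 0 → (#n.divisors : ℝ) ≤ C * (n : ℝ) ^ ε := by
  obtain ⟨C₁, hC₁, hsmall⟩ := exists_add_one_le_mul_pow (r := 2 ^ ε)
    (Real.one_lt_rpow one_lt_two hε)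
  set B : ℝ := 2 ^ (1 / ε)
  refine ⟨C₁ ^ ⌈B⌉₊, by positivity, fun n hn => ?_⟩
  -- Only primes `p < B` contribute a factor `C₁`; for larger ones `a + 1 ≤ (p ^ ε) ^ a`.
  have hfactor : ∀ p ∈ n.primeFactors, (n.factorization p + 1 : ℝ) ≤
      (if (p : ℝ) < B then C₁ else 1) * ((p : ℝ) ^ ε) ^ n.factorization p := by
    intro p hp
    have hp2 : (2 : ℝ) ≤ p := by exact_mod_cast (Nat.prime_of_mem_primeFactors hp).two_le
    split_ifs with hpB
    · exact (hsmall _).trans (by gcongr)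
    · rw [one_mul]; exact add_one_le_rpow_pow hε (not_lt.mp hpB) _
  have hcount : #(n.primeFactors.filter fun p : ℕ => (p : ℝ) < B) ≤ ⌈B⌉₊ :=
    (card_le_card fun p hp => mem_range.mpr <| Nat.lt_ceil.mpr (mem_filter.mp hp).2).trans
      (card_range _).le
  calc (#n.divisors : ℝ) = ∏ p ∈ n.primeFactors, (n.factorization p + 1 : ℝ) := by
        rw [Nat.card_divisors hn]; push_cast; rfl
    _ ≤ ∏ p ∈ n.primeFactors,
          (if (p : ℝ) < B then C₁ else 1) * ((p : ℝ) ^ ε) ^ n.factorization p :=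
        prod_le_prod (fun _ _ => by positivity) hfactor
    _ = C₁ ^ #(n.primeFactors.filter fun p : ℕ => (p : ℝ) < B) * (n : ℝ) ^ ε := by
        rw [prod_mul_distrib, prod_ite, prod_const, prod_const, one_pow, mul_one,
          Nat.cast_rpow_eq_prod_primeFactors hn]
    _ ≤ C₁ ^ ⌈B⌉₊ * (n : ℝ) ^ ε := by gcongr

theorem Int.card_divisors (z : ℤ) : #z.divisors = 2 * #z.natAbs.divisors := by
  rw [Int.divisors, card_disjUnion, card_map, card_map, two_mul]

namespace Polynomial

variable {R : Type*} [CommRing R]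

lemma eval_natCast_mul_eq_of_forall_eval_sub {f : R[X]} {k w : R}
    (h : ∀ x, f.eval x - f.eval (x - k) = w) (j : ℕ) :
    f.eval (j * k) = f.eval 0 + j * w := by
  induction j with
  | zero => simp
  | succ j ih =>
    have := h ((j + 1) * k)
    rw [show ((j : R) + 1) * k - k = j * k by ring, ih] at this
    push_cast
    linear_combination this

variable [IsDomain R] [CharZero R]

theorem sub_comp_X_sub_C_ne_C {f : R[X]} (hf : 2 ≤ f.natDegree) {k : R} (hk : k ≠ 0)
    (w : R) : f - f.comp (X - C k) ≠ C w := by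
  intro h
  have hstep (x : R) : f.eval x - f.eval (x - k) = w := by
    simpa using congrArg (eval x) h
  -- `j ↦ f(j k)` would be affine, but `f.comp (C k * X)` has degree at least two.
  have hlin : f.comp (C k * X) = C (f.eval 0) + C w * X := by
    refine eq_of_infinite_eval_eq _ _ <|
      Set.infinite_of_injective_forall_mem Nat.cast_injective fun j : ℕ => ?_
    simp only [Set.mem_ofPred_eq, eval_comp, eval_mul, eval_add, eval_C, eval_X, mul_comm k,
      eval_natCast_mul_eq_of_forall_eval_sub hstep, mul_comm w]
  have hdeg := congrArg natDegree hlin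
  rw [natDegree_comp, natDegree_C_mul_X k hk, mul_one] at hdeg
  have : (C (f.eval 0) + C w * X).natDegree ≤ 1 := by compute_degree
  omega

lemma card_filter_eval_sub_eval_sub_eq_le [DecidableEq R] {f : R[X]} (hf : 2 ≤ f.natDegree)
    {k : R} (hk : k ≠ 0) (w : R) (s : Finset R) :
    #{x ∈ s | f.eval x - f.eval (x - k) = w} ≤ f.natDegree := by
  set g := f - f.comp (X - C k) - C w
  have hg : g ≠ 0 := sub_ne_zero.mpr (sub_comp_X_sub_C_ne_C hf hk w)
  calc #{x ∈ s | f.eval x - f.eval (x - k) = w} ≤ g.natDegree := by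
        refine card_le_degree_of_subset_roots fun x hx => (mem_roots hg).mpr ?_
        have := (mem_filter.mp hx).2
        simp [g, this]
    _ ≤ f.natDegree := by
        have hcomp : (f.comp (X - C k)).natDegree = f.natDegree := by
          rw [natDegree_comp, natDegree_X_sub_C, mul_one]
        exact (natDegree_sub_le_of_le (natDegree_sub_le_of_le le_rfl hcomp.le)
          (natDegree_C w).le).trans (by simp)

lemma card_filter_sub_eq_le_of_forall_eval_sub_eval_eq [DecidableEq R] {f : R[X]}
    (hf : 2 ≤ f.natDegree) {k w : R} (hk : k ≠ 0) {s : Finset (R × R)}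
    (hs : ∀ q ∈ s, f.eval q.1 - f.eval q.2 = w) :
    #{q ∈ s | q.1 - q.2 = k} ≤ f.natDegree := by
  refine (card_le_card_of_injOn Prod.fst
    (t := {x ∈ s.image Prod.fst | f.eval x - f.eval (x - k) = w}) ?_ ?_).trans
    (card_filter_eval_sub_eval_sub_eq_le hf hk w _)
  · intro q hq
    obtain ⟨hqs, rfl⟩ := mem_filter.mp (mem_coe.mp hq)
    refine mem_coe.mpr (mem_filter.mpr ⟨mem_image_of_mem _ hqs, ?_⟩)
    rw [sub_sub_cancel]
    exact hs q hqs
  · intro q hq q' hq' h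
    have hqk := (mem_filter.mp (mem_coe.mp hq)).2
    have hqk' := (mem_filter.mp (mem_coe.mp hq')).2
    exact Prod.ext h (by linear_combination h - hqk + hqk')

theorem card_filter_eval_sub_eval_eq_le_mul_card_divisors {f : ℤ[X]} (hf : 2 ≤ f.natDegree)
    {w : ℤ} (hw : w ≠ 0) (s : Finset (ℤ × ℤ)) :
    #{q ∈ s | f.eval q.1 - f.eval q.2 = w} ≤ f.natDegree * #w.divisors := by
  refine card_le_mul_card_image_of_maps_to (f := fun q => q.1 - q.2) (fun q hq => ?_) _
    fun k hk => card_filter_sub_eq_le_of_forall_eval_sub_eval_eq hf ?_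
      fun q hq => (mem_filter.mp hq).2
  · exact Int.mem_divisors.mpr ⟨(mem_filter.mp hq).2 ▸ sub_dvd_eval_sub q.1 q.2 f, hw⟩
  · rintro rfl
    exact hw (zero_dvd_iff.mp (Int.dvd_of_mem_divisors hk))

end Polynomial

theorem stmt_8 (f : Polynomial ℤ) (d : ℕ) (hd : 2 ≤ d) (hdeg : f.natDegree = d)
    (ε : ℝ) (hε : 0 < ε) :
    ∃ C : ℝ, 0 < C ∧ ∀ w : ℤ, w ≠ 0 → ∀ H : ℤ, 1 ≤ H →
      ((((Finset.Icc 1 H) ×ˢ (Finset.Icc 1 H)).filter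
          fun q : ℤ × ℤ => f.eval q.1 - f.eval q.2 = w).card : ℝ)
        ≤ C * |(w : ℝ)| ^ ε := by
  obtain ⟨C, hC, hτ⟩ := Nat.exists_card_divisors_le_mul_rpow hε
  refine ⟨2 * d * C, by positivity, fun w hw H _ => ?_⟩
  have hcount := Polynomial.card_filter_eval_sub_eval_eq_le_mul_card_divisors (hdeg ▸ hd) hw
    (Icc 1 H ×ˢ Icc 1 H)
  rw [Int.card_divisors, hdeg] at hcount
  calc _ ≤ ((d * (2 * #w.natAbs.divisors) : ℕ) : ℝ) := by exact_mod_cast hcount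
    _ ≤ d * (2 * (C * (w.natAbs : ℝ) ^ ε)) := by
        push_cast; gcongr; exact hτ _ (Int.natAbs_ne_zero.mpr hw)
    _ = 2 * d * C * |(w : ℝ)| ^ ε := by rw [Nat.cast_natAbs, Int.cast_abs]; ring
end

section
/- Let d ≥ 1 be an integer. There exists a constant C = C(d) > 0 such that for every d × d integer matrix M = (m_{i,j}) with det M ≠ 0 and all reals ε₁, …, ε_d > 0, the Lebesgue measure of the set { (t₁, …, t_d) ∈ [0,1]^d : {m_{1,j} t₁ + … + m_{d,j} t_d} ≤ ε_j for all 1 ≤ j ≤ d } is at most C · ε₁ ⋯ ε_d, where {ξ} denotes the fractional part of the real number ξ. -/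
open Finset MeasureTheory Matrix

theorem my_measurePreserving_pi {ι : Type*} [Fintype ι] {α β : ι → Type*}
    [∀ i, MeasurableSpace (α i)] [∀ i, MeasurableSpace (β i)]
    (μ : ∀ i, Measure (α i)) (ν : ∀ i, Measure (β i))
    [∀ i, SigmaFinite (μ i)] [∀ i, SigmaFinite (ν i)]
    {f : ∀ i, α i → β i} (hf : ∀ i, MeasurePreserving (f i) (μ i) (ν i)) :
    MeasurePreserving (fun (a : ∀ i, α i) i => f i (a i)) (Measure.pi μ) (Measure.pi ν) := by
  have hm : Measurable fun (a : ∀ i, α i) i => f i (a i) :=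
    measurable_pi_lambda _ fun i => (hf i).measurable.comp (measurable_pi_apply i)
  refine ⟨hm, ?_⟩
  refine (Measure.pi_eq fun s hs => ?_).symm
  rw [Measure.map_apply hm (MeasurableSet.univ_pi hs)]
  have : (fun (a : ∀ i, α i) i => f i (a i)) ⁻¹' Set.pi Set.univ s
      = Set.pi Set.univ (fun i => f i ⁻¹' s i) := by
    ext a; simp [Set.mem_pi]
  rw [this, Measure.pi_pi]
  exact Finset.prod_congr rfl fun i _ => (hf i).measure_preimage (hs i).nullMeasurableSet

theorem stmt_11 (d : ℕ) (hd : 1 ≤ d) :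
    ∃ C : ℝ, 0 < C ∧ ∀ M : Matrix (Fin d) (Fin d) ℤ, M.det ≠ 0 →
      ∀ ε : Fin d → ℝ, (∀ j, 0 < ε j) →
      volume {t : Fin d → ℝ | (∀ i, t i ∈ Set.Icc (0 : ℝ) 1) ∧
          ∀ j, Int.fract (∑ i, (M i j : ℝ) * t i) ≤ ε j}
        ≤ ENNReal.ofReal (C * ∏ j, ε j) := by
  refine ⟨1, one_pos, fun M hM ε hε => ?_⟩
  rw [one_mul]
  set E := {t : Fin d → ℝ | (∀ i, t i ∈ Set.Icc (0 : ℝ) 1) ∧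
      ∀ j, Int.fract (∑ i, (M i j : ℝ) * t i) ≤ ε j} with hEdef
  set Q : Set (Fin d → ℝ) := Set.pi Set.univ (fun _ => Set.Ioc (0:ℝ) 1) with hQdef
  set S : Fin d → Set (AddCircle (1:ℝ)) :=
    fun j => (((↑) : ℝ → AddCircle (1:ℝ)) '' Set.Icc 0 (ε j)) with hSdef
  have hScompact : ∀ j, IsCompact (S j) :=
    fun j => isCompact_Icc.image (AddCircle.continuous_mk' 1)
  have hSmeas : ∀ j, MeasurableSet (S j) := fun j => (hScompact j).measurableSet
  -- volume bound for S j
  have hSvol : ∀ j, volume (S j) ≤ ENNReal.ofReal (ε j) := by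
    intro j
    rcases le_or_gt 1 (ε j) with h1 | h1
    · calc volume (S j) ≤ volume (Set.univ : Set (AddCircle (1:ℝ))) :=
            measure_mono (Set.subset_univ _)
        _ = ENNReal.ofReal 1 := AddCircle.measure_univ 1
        _ ≤ _ := ENNReal.ofReal_le_ofReal h1
    · rw [AddCircle.add_projection_respects_measure 1 0 (hSmeas j)]
      have hsub : QuotientAddGroup.mk ⁻¹' S j ∩ Set.Ioc 0 (0+1) ⊆
          Set.Ioc 0 (ε j) ∪ {(1:ℝ)} := by
        rintro x ⟨hx1, hx2⟩
        rw [zero_add] at hx2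
        obtain ⟨y, hy, hxy⟩ := hx1
        rw [QuotientAddGroup.eq_iff_sub_mem] at hxy
        obtain ⟨k, hk⟩ := AddSubgroup.mem_zmultiples_iff.mp hxy
        rw [zsmul_eq_mul, mul_one] at hk
        have hklt : (k:ℝ) < 1 := by
          rw [hk]; have := hy.2; have := hx2.1; linarith
        have hkge : (-1:ℝ) ≤ (k:ℝ) := by
          rw [hk]; have := hy.1; have := hx2.2; linarith
        have hk01 : k = -1 ∨ k = 0 := by
          have h1' : k < 1 := by exact_mod_cast hklt
          have h2' : (-1:ℤ) ≤ k := by exact_mod_cast hkge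
          omega
        rcases hk01 with h | h
        · right
          have : y - x = -1 := by rw [← hk, h]; norm_num
          have hx1' : x = y + 1 := by linarith
          have : x = 1 := le_antisymm hx2.2 (by rw [hx1']; linarith [hy.1])
          simp [this]
        · left
          have : y = x := by rw [h] at hk; push_cast at hk; linarith
          exact ⟨hx2.1, by rw [← this] at *; exact hy.2⟩
      calc volume (QuotientAddGroup.mk ⁻¹' S j ∩ Set.Ioc 0 (0+1))
          ≤ volume (Set.Ioc 0 (ε j) ∪ {(1:ℝ)}) := measure_mono hsub
        _ ≤ volume (Set.Ioc 0 (ε j)) + volume ({(1:ℝ)} : Set ℝ) := measure_union_le _ _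
        _ = ENNReal.ofReal (ε j) := by
            rw [Real.volume_Ioc, Real.volume_singleton, add_zero, sub_zero]
  -- the torus endomorphism
  set A : (Fin d → AddCircle (1:ℝ)) →+ (Fin d → AddCircle (1:ℝ)) :=
    { toFun := fun x j => ∑ i, M i j • x i,
      map_zero' := by funext j; simp,
      map_add' := by intro x y; funext j; simp [smul_add, Finset.sum_add_distrib] } with hAdef
  set Φ : (Fin d → ℝ) → (Fin d → AddCircle (1:ℝ)) :=
    fun t i => ((t i : ℝ) : AddCircle (1:ℝ)) with hΦdef
  have hcoe_sum : ∀ (f : Fin d → ℝ),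
      ((∑ i, f i : ℝ) : AddCircle (1:ℝ)) = ∑ i, ((f i : ℝ) : AddCircle (1:ℝ)) :=
    fun f => map_sum (QuotientAddGroup.mk' (AddSubgroup.zmultiples (1:ℝ))) f Finset.univ
  have hkey : ∀ (t : Fin d → ℝ) (j : Fin d),
      A (Φ t) j = (((∑ i, (M i j : ℝ) * t i : ℝ)) : AddCircle (1:ℝ)) := by
    intro t j
    show ∑ i, M i j • ((t i : ℝ) : AddCircle (1:ℝ)) = _
    rw [hcoe_sum]
    refine Finset.sum_congr rfl fun i _ => ?_
    rw [show (M i j : ℝ) * t i = (M i j : ℤ) • t i from (zsmul_eq_mul _ _).symm,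
      AddCircle.coe_zsmul]
  have hAcont : Continuous A := by
    show Continuous fun (x : Fin d → AddCircle (1:ℝ)) (j : Fin d) => ∑ i, M i j • x i
    exact continuous_pi fun j => continuous_finset_sum _ fun i _ =>
      (continuous_apply i).zsmul (M i j)
  have hAsurj : Function.Surjective A := by
    intro y
    choose r hr using fun j => QuotientAddGroup.mk_surjective (y j)
    set N : Matrix (Fin d) (Fin d) ℝ := (Int.castRingHom ℝ).mapMatrix M with hNdef
    have hdet : IsUnit (Nᵀ).det := by
      rw [Matrix.det_transpose]
      refine isUnit_iff_ne_zero.mpr ?_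
      rw [hNdef, ← RingHom.map_det]
      simpa using hM
    refine ⟨Φ ((Nᵀ)⁻¹.mulVec r), ?_⟩
    funext j
    rw [hkey]
    have h2 : Nᵀ.mulVec ((Nᵀ)⁻¹.mulVec r) = r := by
      rw [Matrix.mulVec_mulVec, Matrix.mul_nonsing_inv _ hdet, Matrix.one_mulVec]
    have h3 : ∑ i, (M i j : ℝ) * ((Nᵀ)⁻¹.mulVec r) i = r j := by
      calc ∑ i, (M i j : ℝ) * ((Nᵀ)⁻¹.mulVec r) i
          = (Nᵀ.mulVec ((Nᵀ)⁻¹.mulVec r)) j := by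
            simp [Matrix.mulVec, dotProduct, Matrix.transpose_apply, hNdef]
        _ = r j := by rw [h2]
    rw [h3, hr j]
  haveI hHaar : Measure.IsAddHaarMeasure (volume : Measure (Fin d → AddCircle (1:ℝ))) := by
    rw [volume_pi]; infer_instance
  have hA : MeasurePreserving A (volume : Measure (Fin d → AddCircle (1:ℝ))) volume :=
    AddMonoidHom.measurePreserving hAcont hAsurj rfl
  have hBmeas : MeasurableSet (A ⁻¹' Set.pi Set.univ S) :=
    (MeasurableSet.univ_pi fun j => hSmeas j).preimage hAcont.measurable
  -- measure preserving Φ on Q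
  have hρ : volume.restrict Q =
      Measure.pi (fun _ : Fin d => volume.restrict (Set.Ioc (0:ℝ) 1)) := by
    refine (Measure.pi_eq fun s hs => ?_).symm
    rw [Measure.restrict_apply (MeasurableSet.univ_pi hs), hQdef, ← Set.pi_inter_distrib,
      volume_pi_pi]
    exact Finset.prod_congr rfl fun i _ => (Measure.restrict_apply (hs i)).symm
  have hΦmp : MeasurePreserving Φ (volume.restrict Q)
      (volume : Measure (Fin d → AddCircle (1:ℝ))) := by
    rw [hρ, show (volume : Measure (Fin d → AddCircle (1:ℝ)))
      = Measure.pi (fun _ => volume) from volume_pi]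
    exact my_measurePreserving_pi _ _ fun i => by
      simpa using AddCircle.measurePreserving_mk 1 0
  -- inclusion
  have hEQ : E ∩ Q ⊆ Φ ⁻¹' (A ⁻¹' Set.pi Set.univ S) := by
    rintro t ⟨⟨hIcc, hfr⟩, hQ⟩
    simp only [Set.mem_preimage, Set.mem_pi, Set.mem_univ, forall_true_left]
    intro j
    rw [hkey t j]
    refine ⟨Int.fract (∑ i, (M i j:ℝ) * t i), ⟨Int.fract_nonneg _, hfr j⟩, ?_⟩
    rw [QuotientAddGroup.eq_iff_sub_mem]
    refine AddSubgroup.mem_zmultiples_iff.mpr ⟨-⌊∑ i, (M i j:ℝ) * t i⌋, ?_⟩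
    rw [zsmul_eq_mul, mul_one, Int.fract]
    push_cast
    ring
  -- null part
  have hZ : ∀ i, volume {t : Fin d → ℝ | t i = 0} = 0 := by
    intro i
    have hset : {t : Fin d → ℝ | t i = 0}
        = Set.pi Set.univ (fun k => if k = i then ({0}: Set ℝ) else Set.univ) := by
      ext t
      constructor
      · intro h k _
        by_cases hk : k = i
        · subst hk; simpa using h
        · simp [hk]
      · intro h
        have := h i (Set.mem_univ i)
        simpa using this
    rw [hset, volume_pi_pi]
    exact Finset.prod_eq_zero (Finset.mem_univ i) (by simp)
  have hnull : volume (E \ Q) = 0 := by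
    refine measure_mono_null (fun t ht => ?_) (measure_iUnion_null fun i => hZ i)
    obtain ⟨htE, htQ⟩ := ht
    have : ∃ i, t i ∉ Set.Ioc (0:ℝ) 1 := by
      by_contra h
      push_neg at h
      exact htQ fun i _ => h i
    obtain ⟨i, hi⟩ := this
    have hIcc := htE.1 i
    have : t i = 0 := by
      rcases hIcc with ⟨h0, h1'⟩
      by_contra h
      exact hi ⟨lt_of_le_of_ne h0 (Ne.symm h), h1'⟩
    exact Set.mem_iUnion.mpr ⟨i, this⟩
  -- final computation
  calc volume E ≤ volume (E ∩ Q) + volume (E \ Q) := measure_le_inter_add_diff _ _ _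
    _ = volume (E ∩ Q) := by rw [hnull, add_zero]
    _ ≤ volume (Φ ⁻¹' (A ⁻¹' Set.pi Set.univ S) ∩ Q) := by
        refine measure_mono fun t ht => ⟨hEQ ht, ht.2⟩
    _ = (volume.restrict Q) (Φ ⁻¹' (A ⁻¹' Set.pi Set.univ S)) := by
        rw [Measure.restrict_apply (hBmeas.preimage hΦmp.measurable)]
    _ = volume (A ⁻¹' Set.pi Set.univ S) := hΦmp.measure_preimage hBmeas.nullMeasurableSet
    _ = volume (Set.pi Set.univ S) :=
        hA.measure_preimage (MeasurableSet.univ_pi fun j => hSmeas j).nullMeasurableSet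
    _ = ∏ j, volume (S j) := volume_pi_pi S
    _ ≤ ∏ j, ENNReal.ofReal (ε j) := Finset.prod_le_prod' fun j _ => hSvol j
    _ = ENNReal.ofReal (∏ j, ε j) := by
        rw [← ENNReal.ofReal_prod_of_nonneg fun j _ => (hε j).le]
end

section
/- Let d ≥ 2 and s ≥ 1 be integers. There exists a constant C = C(d, s) > 0 such that for every integer m ≥ 2, every polynomial f(X) = a_d X^d + … + a_1 X + a_0 ∈ ℤ_m[X] of degree d with gcd(a_d, m) = 1, and every integer H with 1 ≤ H ≤ m, one has T_s ≤ C · ( H^d/m + 1 ) · H^{d(d−1)/2 + 1} · J_{d,s}({1, …, H}), where T_s denotes the number of 2s-tuples (x₁, …, x_{2s}) ∈ {1, …, H}^{2s} with f(x₁) + … + f(x_s) ≡ f(x_{s+1}) + … + f(x_{2s}) (mod m). -/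
open Finset

/-- `Tscount m H s f` is the number of `2s`-tuples `(x₁, …, x_{2s}) ∈ {1, …, H}^{2s}` (encoded
as pairs of `s`-tuples) with `f(x₁) + … + f(x_s) ≡ f(x_{s+1}) + … + f(x_{2s}) (mod m)`. -/
def Tscount (m H s : ℕ) (f : Polynomial (ZMod m)) : ℕ :=
  (((Fintype.piFinset fun _ : Fin s => Finset.Icc 1 H) ×ˢ
      (Fintype.piFinset fun _ : Fin s => Finset.Icc 1 H)).filter
    fun p => ∑ i, f.eval ((p.1 i : ℕ) : ZMod m) = ∑ i, f.eval ((p.2 i : ℕ) : ZMod m)).card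

/-- `Jcount d s X` is the number of `2s`-tuples `(x₁, …, x_{2s}) ∈ X^{2s}` (encoded as pairs of
`s`-tuples) satisfying `x₁^j + … + x_s^j = x_{s+1}^j + … + x_{2s}^j` for every `1 ≤ j ≤ d`. -/
def Jcount (d s : ℕ) (X : Finset ℤ) : ℕ :=
  (((Fintype.piFinset fun _ : Fin s => X) ×ˢ (Fintype.piFinset fun _ : Fin s => X)).filter
    fun p => ∀ j ∈ Finset.Icc 1 d, ∑ i, (p.1 i) ^ j = ∑ i, (p.2 i) ^ j).card

/-
Write `f = a₀ + a₁ X + ⋯ + a_d X^d` and let `σ(x) ∈ ℤ^d` be the vector of power sums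
`σ_k(x) = x₁^k + ⋯ + x_s^k`. The congruence `∑ f(xᵢ) ≡ ∑ f(yᵢ)` says exactly that
`v = σ(x) - σ(y)`, which satisfies `|v_k| ≤ s H^k`, solves `a₁ v₁ + ⋯ + a_d v_d ≡ 0 (mod m)`.
As `a_d` is a unit, `v_d` is fixed modulo `m` by `v₁, …, v_{d-1}`, so there are at most
`∏_{k<d} (2sH^k + 1) · ((2sH^d + 1)/m + 1)` such `v`. For each `v`, by AM-GM applied to the
representation function `r(λ) = #{x : σ(x) = λ}`, the number of pairs with `σ(x) - σ(y) = v`,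
namely `∑_λ r(λ + v) r(λ)`, is at most `∑_λ r(λ)² = J_{d,s}`.
-/

open Polynomial

section DifferenceFibres

variable {α G : Type*} [AddCommGroup G] [DecidableEq G]

theorem card_filter_sub_eq_le_card_filter_eq (B : Finset α) (φ : α → G) (v : G) :
    #{p ∈ B ×ˢ B | φ p.1 - φ p.2 = v} ≤ #{p ∈ B ×ˢ B | φ p.1 = φ p.2} := by
  set S := B.image φ
  set r : G → ℕ := fun μ => #{x ∈ B | φ x = μ}
  have hcount : ∀ w, #{p ∈ B ×ˢ B | φ p.1 - φ p.2 = w} = ∑ μ ∈ S, r (μ + w) * r μ := by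
    intro w
    rw [card_eq_sum_card_fiberwise (f := fun p => φ p.2) (t := S)
      (fun p hp => mem_image_of_mem φ (mem_product.mp (mem_filter.mp hp).1).2)]
    refine sum_congr rfl fun μ _ => ?_
    rw [← card_product, filter_filter]
    congr 1
    ext ⟨x, y⟩
    simp only [mem_filter, mem_product, sub_eq_iff_eq_add]
    grind
  have hshift : ∑ μ ∈ S, r (μ + v) ^ 2 ≤ ∑ μ ∈ S, r μ ^ 2 := by
    rw [← sum_image (g := (· + v)) (f := fun μ => r μ ^ 2) fun _ _ _ _ => add_right_cancel]
    refine sum_le_sum_of_ne_zero fun μ _ hμ => ?_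
    obtain ⟨x, hx⟩ := card_ne_zero.mp (pow_ne_zero_iff two_ne_zero |>.mp hμ)
    exact mem_image.mpr ⟨x, (mem_filter.mp hx).1, (mem_filter.mp hx).2⟩
  have hdiag : #{p ∈ B ×ˢ B | φ p.1 = φ p.2} = ∑ μ ∈ S, r μ ^ 2 := by
    simp_rw [← sub_eq_zero (a := φ _), hcount, add_zero, sq]
  have hamgm : 2 * ∑ μ ∈ S, r (μ + v) * r μ ≤ ∑ μ ∈ S, r (μ + v) ^ 2 + ∑ μ ∈ S, r μ ^ 2 := by
    rw [mul_sum, ← sum_add_distrib]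
    exact sum_le_sum fun μ _ => by rw [← mul_assoc]; exact two_mul_le_add_sq _ _
  rw [hcount, hdiag]
  omega

theorem card_le_card_mul_card_filter_eq (B : Finset α) (φ : α → G) {P : Finset (α × α)}
    {V : Finset G} (hPB : P ⊆ B ×ˢ B) (hPV : ∀ p ∈ P, φ p.1 - φ p.2 ∈ V) :
    #P ≤ #V * #{p ∈ B ×ˢ B | φ p.1 = φ p.2} := by
  rw [card_eq_sum_card_fiberwise hPV, ← smul_eq_mul, ← sum_const]
  exact sum_le_sum fun v _ => (card_le_card (filter_subset_filter _ hPB)).trans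
    (card_filter_sub_eq_le_card_filter_eq B φ v)

end DifferenceFibres

theorem Int.card_filter_intCast_eq_le (m : ℕ) [NeZero m] {a b : ℤ} (hab : a ≤ b) (t : ZMod m) :
    (#{x ∈ Icc a b | ((x : ℤ) : ZMod m) = t} : ℝ) ≤ (b - a + 1) / m + 1 := by
  obtain ⟨v, rfl⟩ := ZMod.intCast_surjective t
  have hm : (0 : ℤ) < m := by exact_mod_cast NeZero.pos m
  have hcard := Int.Ioc_filter_modEq_card (a - 1) b hm v
  simp only [← ZMod.intCast_eq_intCast_iff, Ioc_sub_one_left_eq_Icc] at hcard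
  have hfloor : (#{x ∈ Icc a b | ((x : ℤ) : ZMod m) = v} : ℚ) ≤ (b - a + 1) / m + 1 := by
    rw [← Int.cast_natCast, hcard, Int.cast_max, max_le_iff]
    push_cast
    constructor
    · have := Int.floor_le ((b - v) / (m : ℚ))
      have := Int.lt_floor_add_one ((a - 1 - v) / (m : ℚ))
      have : ((b : ℚ) - v) / m - (a - 1 - v) / m = (b - a + 1) / m := by ring
      linarith
    · have : (a : ℚ) ≤ b := by exact_mod_cast hab
      positivity
  exact_mod_cast hfloor

theorem card_filter_linear_eq_zero_le {n m : ℕ} (c : Fin (n + 1) → ZMod m)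
    (hc : IsUnit (c (Fin.last n))) (I : Fin (n + 1) → Finset ℤ) {N : ℝ}
    (hN : ∀ t : ZMod m, (#{x ∈ I (Fin.last n) | ((x : ℤ) : ZMod m) = t} : ℝ) ≤ N) :
    (#{v ∈ Fintype.piFinset I | ∑ k, c k * v k = 0} : ℝ) ≤
      N * ∏ k : Fin n, (#(I k.castSucc) : ℝ) := by
  set V := {v ∈ Fintype.piFinset I | ∑ k, c k * v k = 0}
  have hfiber : ∀ w : Fin n → ℤ, (#{v ∈ V | Fin.init v = w} : ℝ) ≤ N := by
    intro w
    refine le_trans (Nat.cast_le.mpr (card_le_card_of_injOn (fun v => v (Fin.last n))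
      (t := {x ∈ I (Fin.last n) | ((x : ℤ) : ZMod m) =
        ↑hc.unit⁻¹ * -∑ k : Fin n, c k.castSucc * w k}) ?_ ?_)) (hN _)
    · intro v hv
      simp only [V, coe_filter, Set.mem_ofPred_eq, Fintype.mem_piFinset, mem_filter] at hv ⊢
      obtain ⟨⟨hvI, hv0⟩, rfl⟩ := hv
      refine ⟨hvI _, ?_⟩
      rw [Fin.sum_univ_castSucc, add_eq_zero_iff_eq_neg'] at hv0
      simp only [Fin.init]
      rw [← hv0, ← mul_assoc, IsUnit.val_inv_mul, one_mul]
    · intro v hv v' hv' hvv'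
      simp only [V, coe_filter, Set.mem_ofPred_eq] at hv hv'
      rw [← Fin.snoc_init_self v, ← Fin.snoc_init_self v', hv.2, hv'.2]
      exact congrArg _ hvv'
  have himage : V.image Fin.init ⊆ Fintype.piFinset fun k : Fin n => I k.castSucc := by
    intro w hw
    obtain ⟨v, hv, rfl⟩ := mem_image.mp hw
    exact Fintype.mem_piFinset.mpr fun k => Fintype.mem_piFinset.mp (mem_filter.mp hv).1 _
  have hN0 : 0 ≤ N := (Nat.cast_nonneg _).trans (hN 0)
  calc (#V : ℝ) = ∑ w ∈ V.image Fin.init, (#{v ∈ V | Fin.init v = w} : ℝ) := by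
        exact_mod_cast card_eq_sum_card_image Fin.init V
    _ ≤ #(V.image Fin.init) * N := by
        simpa using sum_le_sum fun w (_ : w ∈ V.image Fin.init) => hfiber w
    _ ≤ N * ∏ k : Fin n, (#(I k.castSucc) : ℝ) := by
        rw [mul_comm]
        gcongr
        exact_mod_cast (card_le_card himage).trans (Fintype.card_piFinset _).le

theorem Polynomial.sum_eval_eq {R ι : Type*} [CommRing R] [Fintype ι] {f : R[X]} {d : ℕ}
    (hf : f.natDegree ≤ d) (x : ι → R) :
    ∑ i, f.eval (x i) =
      Fintype.card ι • f.coeff 0 + ∑ k : Fin d, f.coeff (k + 1) * ∑ i, x i ^ (k + 1 : ℕ) := by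
  simp_rw [eval_eq_sum_range' (Nat.lt_succ_of_le hf)]
  rw [sum_comm, sum_range_succ', Fin.sum_univ_eq_sum_range
    (fun k => f.coeff (k + 1) * ∑ i, x i ^ (k + 1)), add_comm]
  simp [mul_sum]

theorem card_Icc_neg_natCast (L : ℕ) : #(Icc (-(L : ℤ)) L) = 2 * L + 1 := by
  rw [Int.card_Icc]
  omega

theorem prod_card_Icc_neg_le (s H n : ℕ) (hH : 1 ≤ H) :
    ∏ k : Fin n, (#(Icc (-(s * H ^ (k + 1 : ℕ) : ℤ)) (s * H ^ (k + 1 : ℕ))) : ℝ) ≤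
      (2 * s + 1) ^ n * H ^ ((n + 1) * n / 2) := by
  have hexp : ∑ k : Fin n, (k + 1 : ℕ) = (n + 1) * n / 2 := by
    have := sum_range_id (n + 1)
    rw [sum_range_succ', Nat.add_sub_cancel] at this
    rw [Fin.sum_univ_eq_sum_range (· + 1), ← this, add_zero]
  calc ∏ k : Fin n, (#(Icc (-(s * H ^ (k + 1 : ℕ) : ℤ)) (s * H ^ (k + 1 : ℕ))) : ℝ)
      ≤ ∏ k : Fin n, ((2 * s + 1) * (H : ℝ) ^ (k + 1 : ℕ)) := by
        refine prod_le_prod (fun _ _ => by positivity) fun k _ => ?_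
        have hpow : (1 : ℝ) ≤ (H : ℝ) ^ (k + 1 : ℕ) := one_le_pow₀ (by exact_mod_cast hH)
        have := card_Icc_neg_natCast (s * H ^ (k + 1 : ℕ))
        push_cast at this
        rw [this]
        push_cast
        nlinarith
    _ = (2 * s + 1) ^ n * H ^ ((n + 1) * n / 2) := by
        rw [prod_mul_distrib, prod_const, card_univ, Fintype.card_fin, prod_pow_eq_pow_sum, hexp]

def powerSums (d : ℕ) {s : ℕ} (x : Fin s → ℤ) : Fin d → ℤ := fun k => ∑ i, x i ^ (k + 1 : ℕ)

theorem powerSums_sub_mem_Icc {d s H : ℕ} {x y : Fin s → ℤ}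
    (hx : x ∈ Fintype.piFinset fun _ => Icc 1 (H : ℤ))
    (hy : y ∈ Fintype.piFinset fun _ => Icc 1 (H : ℤ)) (k : Fin d) :
    powerSums d x k - powerSums d y k ∈ Icc (-(s * H ^ (k + 1 : ℕ) : ℤ)) (s * H ^ (k + 1 : ℕ)) := by
  have hbound : ∀ z ∈ Fintype.piFinset fun _ : Fin s => Icc 1 (H : ℤ),
      0 ≤ powerSums d z k ∧ powerSums d z k ≤ s * H ^ (k + 1 : ℕ) := by
    intro z hz
    have hzi : ∀ i, 0 ≤ z i ∧ z i ≤ H := fun i => by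
      have := mem_Icc.mp (Fintype.mem_piFinset.mp hz i)
      omega
    refine ⟨sum_nonneg fun i _ => pow_nonneg (hzi i).1 _, ?_⟩
    calc powerSums d z k ≤ ∑ _i : Fin s, (H : ℤ) ^ (k + 1 : ℕ) :=
          sum_le_sum fun i _ => pow_le_pow_left₀ (hzi i).1 (hzi i).2 _
      _ = s * H ^ (k + 1 : ℕ) := by simp
  obtain ⟨hx0, hxH⟩ := hbound x hx
  obtain ⟨hy0, hyH⟩ := hbound y hy
  exact mem_Icc.mpr ⟨by linarith, by linarith⟩

theorem Jcount_eq_card_filter_powerSums_eq (d s : ℕ) (X : Finset ℤ) :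
    Jcount d s X =
      #{p ∈ (Fintype.piFinset fun _ : Fin s => X) ×ˢ Fintype.piFinset fun _ : Fin s => X |
        powerSums d p.1 = powerSums d p.2} := by
  refine congrArg card (filter_congr fun p _ => ?_)
  simp only [funext_iff, powerSums, mem_Icc]
  constructor
  · exact fun h k => h (k + 1) ⟨by omega, k.isLt⟩
  · intro h j hj
    simpa [Nat.sub_add_cancel hj.1] using h ⟨j - 1, by omega⟩

theorem sum_eval_intCast_eq_iff {R : Type*} [CommRing R] {f : R[X]} {d s : ℕ}
    (hf : f.natDegree ≤ d) (x y : Fin s → ℤ) :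
    ∑ i, f.eval (x i : R) = ∑ i, f.eval (y i : R) ↔
      ∑ k : Fin d, f.coeff (k + 1) * ((powerSums d x k - powerSums d y k : ℤ) : R) = 0 := by
  rw [sum_eval_eq hf, sum_eval_eq hf, add_right_inj, ← sub_eq_zero, ← sum_sub_distrib]
  simp [powerSums, mul_sub]

theorem Tscount_le_card_filter_intCast (m H s : ℕ) (f : (ZMod m)[X]) :
    Tscount m H s f ≤
      #{p ∈ (Fintype.piFinset fun _ : Fin s => Icc 1 (H : ℤ)) ×ˢ
          Fintype.piFinset fun _ : Fin s => Icc 1 (H : ℤ) |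
        ∑ i, f.eval (p.1 i : ZMod m) = ∑ i, f.eval (p.2 i : ZMod m)} := by
  have hinj : Function.Injective fun x : Fin s → ℕ => fun i => (x i : ℤ) :=
    Nat.cast_injective.comp_left
  refine card_le_card_of_injOn (Prod.map _ _) (fun p hp => ?_) (hinj.prodMap hinj).injOn
  simp only [coe_filter, mem_product, Fintype.mem_piFinset, mem_Icc, Set.mem_ofPred_eq,
    Prod.map_fst, Prod.map_snd] at hp ⊢
  refine ⟨⟨fun i => ?_, fun i => ?_⟩, by simpa using hp.2⟩
  · have := hp.1.1 i
    omega
  · have := hp.1.2 i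
    omega

noncomputable def admissibleDiffs (m s H d : ℕ) (f : (ZMod m)[X]) : Finset (Fin d → ℤ) :=
  {v ∈ Fintype.piFinset fun k : Fin d => Icc (-(s * H ^ (k + 1 : ℕ) : ℤ)) (s * H ^ (k + 1 : ℕ)) |
    ∑ k : Fin d, f.coeff (k + 1 : ℕ) * ((v k : ℤ) : ZMod m) = 0}

theorem Tscount_le_card_admissibleDiffs_mul_Jcount {m H s d : ℕ} {f : (ZMod m)[X]}
    (hf : f.natDegree ≤ d) :
    Tscount m H s f ≤ #(admissibleDiffs m s H d f) * Jcount d s (Icc 1 H) := by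
  rw [Jcount_eq_card_filter_powerSums_eq]
  refine (Tscount_le_card_filter_intCast m H s f).trans
    (card_le_card_mul_card_filter_eq _ (powerSums d) (filter_subset _ _) fun p hp => ?_)
  obtain ⟨hpB, hpf⟩ := mem_filter.mp hp
  obtain ⟨hp₁, hp₂⟩ := mem_product.mp hpB
  exact mem_filter.mpr ⟨Fintype.mem_piFinset.mpr (powerSums_sub_mem_Icc hp₁ hp₂),
    (sum_eval_intCast_eq_iff hf p.1 p.2).mp hpf⟩

theorem card_admissibleDiffs_le {m H s n : ℕ} [NeZero m] {f : (ZMod m)[X]}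
    (hu : IsUnit (f.coeff (n + 1))) (hH : 1 ≤ H) :
    (#(admissibleDiffs m s H (n + 1) f) : ℝ) ≤
      (2 * s + 1) ^ (n + 1) * ((H : ℝ) ^ (n + 1) / m + 1) * H ^ ((n + 1) * n / 2) := by
  have hL : (0 : ℤ) ≤ s * H ^ (n + 1) := by positivity
  have hlast : ∀ t : ZMod m,
      (#{x ∈ Icc (-(s * H ^ (n + 1) : ℤ)) (s * H ^ (n + 1)) | ((x : ℤ) : ZMod m) = t} : ℝ) ≤
        (2 * s + 1) * ((H : ℝ) ^ (n + 1) / m + 1) := by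
    intro t
    have hpow : (1 : ℝ) ≤ (H : ℝ) ^ (n + 1) := one_le_pow₀ (by exact_mod_cast hH)
    have hdiv : ((2 * s * H ^ (n + 1) + 1) / m : ℝ) ≤ (2 * s + 1) * ((H : ℝ) ^ (n + 1) / m) := by
      rw [mul_div_assoc']
      gcongr
      linarith
    calc (#{x ∈ Icc (-(s * H ^ (n + 1) : ℤ)) (s * H ^ (n + 1)) | ((x : ℤ) : ZMod m) = t} : ℝ)
        ≤ (((s * H ^ (n + 1) : ℤ) - (-(s * H ^ (n + 1)) : ℤ) + 1 : ℝ)) / m + 1 :=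
          Int.card_filter_intCast_eq_le m (neg_le_self hL) t
      _ = (2 * s * H ^ (n + 1) + 1) / m + 1 := by push_cast; ring
      _ ≤ (2 * s + 1) * ((H : ℝ) ^ (n + 1) / m + 1) := by nlinarith
  calc (#(admissibleDiffs m s H (n + 1) f) : ℝ)
      ≤ (2 * s + 1) * ((H : ℝ) ^ (n + 1) / m + 1) *
          ∏ k : Fin n, (#(Icc (-(s * H ^ (k + 1 : ℕ) : ℤ)) (s * H ^ (k + 1 : ℕ))) : ℝ) :=
        card_filter_linear_eq_zero_le _ hu _ hlast
    _ ≤ (2 * s + 1) * ((H : ℝ) ^ (n + 1) / m + 1) * ((2 * s + 1) ^ n * H ^ ((n + 1) * n / 2)) := by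
        gcongr
        exact prod_card_Icc_neg_le s H n hH
    _ = (2 * s + 1) ^ (n + 1) * ((H : ℝ) ^ (n + 1) / m + 1) * H ^ ((n + 1) * n / 2) := by ring

theorem stmt_15_general (d s : ℕ) (hd : 2 ≤ d) :
    ∃ C : ℝ, 0 < C ∧ ∀ m : ℕ, 2 ≤ m → ∀ f : Polynomial (ZMod m),
      f.natDegree = d → IsUnit f.leadingCoeff →
      ∀ H : ℕ, 1 ≤ H → H ≤ m →
      (Tscount m H s f : ℝ) ≤
        C * ((H : ℝ) ^ d / (m : ℝ) + 1) * (H : ℝ) ^ (d * (d - 1) / 2 + 1) *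
          (Jcount d s (Finset.Icc (1 : ℤ) (H : ℤ)) : ℝ) := by
  obtain ⟨n, rfl⟩ : ∃ n, d = n + 1 := ⟨d - 1, by omega⟩
  refine ⟨(2 * s + 1) ^ (n + 1), by positivity, fun m hm f hf hu H hH _ => ?_⟩
  have : NeZero m := ⟨by omega⟩
  have hT := Tscount_le_card_admissibleDiffs_mul_Jcount (H := H) (s := s) hf.le
  have hV := card_admissibleDiffs_le (s := s) (by rwa [leadingCoeff, hf] at hu) hH
  rw [Nat.add_sub_cancel]
  calc (Tscount m H s f : ℝ)
      ≤ #(admissibleDiffs m s H (n + 1) f) * Jcount (n + 1) s (Icc 1 H) := by exact_mod_cast hT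
    _ ≤ (2 * s + 1) ^ (n + 1) * ((H : ℝ) ^ (n + 1) / m + 1) * H ^ ((n + 1) * n / 2) *
          Jcount (n + 1) s (Icc 1 H) := by gcongr
    _ ≤ (2 * s + 1) ^ (n + 1) * ((H : ℝ) ^ (n + 1) / m + 1) * H ^ ((n + 1) * n / 2 + 1) *
          Jcount (n + 1) s (Icc 1 H) := by
        gcongr
        · exact_mod_cast hH
        · omega

theorem stmt_15 (d s : ℕ) (hd : 2 ≤ d) (hs : 1 ≤ s) :
    ∃ C : ℝ, 0 < C ∧ ∀ m : ℕ, 2 ≤ m → ∀ f : Polynomial (ZMod m),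
      f.natDegree = d → IsUnit f.leadingCoeff →
      ∀ H : ℕ, 1 ≤ H → H ≤ m →
      (Tscount m H s f : ℝ) ≤
        C * ((H : ℝ) ^ d / (m : ℝ) + 1) * (H : ℝ) ^ (d * (d - 1) / 2 + 1) *
          (Jcount d s (Finset.Icc (1 : ℤ) (H : ℤ)) : ℝ) :=
  stmt_15_general d s hd
end
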